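/- Define F(n,k) = (-1)^{n+k} (n-k-1)! (k!)^2 H_k(2) / (n+k+1)! for n ≥ k+1, and G(n,k) = 2(-1)^{n+k} (n-k)! (k!)^2 (H_k(2) - 1/(n+1)^2) / ((n+k+1)! (n+1)) for n ≥ k, where H_k(2) = ∑_{j=1}^k 1/j^2. Then for all integers n ≥ k+1 ≥ 1, F(n+1,k) - F(n,k) = G(n,k+1) - G(n,k). -/

import Mathlib

def H2 (k : ℕ) : ℚ := ∑ j ∈ Finset.Icc 1 k, 1 / (j : ℚ) ^ 2

noncomputable def F (n k : ℕ) : ℚ :=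
  (-1 : ℚ) ^ (n + k) * ((n - k - 1).factorial : ℚ) * ((k.factorial : ℚ)) ^ 2 * H2 k
    / ((n + k + 1).factorial : ℚ)

noncomputable def G (n k : ℕ) : ℚ :=
  2 * (-1 : ℚ) ^ (n + k) * ((n - k).factorial : ℚ) * ((k.factorial : ℚ)) ^ 2
    * (H2 k - 1 / ((n : ℚ) + 1) ^ 2) / (((n + k + 1).factorial : ℚ) * ((n : ℚ) + 1))

/-!
Each of `F (n + 1) k`, `F n k`, `G n (k + 1)`, `G n k` is the common hypergeometric term
`wzFactor n k` times a rational function of `n`, `k` and `H2 k` (using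
`H2 (k + 1) = H2 k + 1 / (k + 1) ^ 2`). The coefficients of `H2 k` then match because
`(k + 1) ^ 2 + (n - k) (n + k + 2) = (n + 1) ^ 2`, and the same identity makes the remaining
terms cancel.
-/

lemma H2_succ (k : ℕ) : H2 (k + 1) = H2 k + 1 / ((k : ℚ) + 1) ^ 2 := by
  rw [H2, Finset.sum_Icc_succ_top (Nat.le_add_left 1 k), H2]
  push_cast
  rfl

noncomputable def wzFactor (n k : ℕ) : ℚ :=
  (-1 : ℚ) ^ (n + k) * ((n - k - 1).factorial : ℚ) * (k.factorial : ℚ) ^ 2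
    / ((n + k + 2).factorial : ℚ)

section
variable {n k : ℕ}

lemma F_eq_wzFactor : F n k = wzFactor n k * ((n : ℚ) + k + 2) * H2 k := by
  have hf : ((n + k + 2).factorial : ℚ) = ((n : ℚ) + k + 2) * (n + k + 1).factorial := by
    rw [Nat.factorial_succ]; push_cast; ring
  rw [F, wzFactor, hf]
  field_simp

lemma F_succ_left_eq_wzFactor (h : k < n) :
    F (n + 1) k = -wzFactor n k * ((n : ℚ) - k) * H2 k := by
  obtain ⟨m, rfl⟩ := Nat.exists_eq_add_of_lt h
  have hm : k + m + 1 + 1 - k - 1 = m + 1 := by omega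
  have hm' : k + m + 1 - k - 1 = m := by omega
  have hs : k + m + 1 + 1 + k + 1 = k + m + 1 + k + 2 := by omega
  rw [F, wzFactor, hm, hm', hs, Nat.factorial_succ m, pow_succ]
  push_cast
  ring

lemma G_eq_wzFactor (h : k < n) :
    G n k = 2 * wzFactor n k * (((n : ℚ) - k) * (n + k + 2) / (n + 1))
      * (H2 k - 1 / ((n : ℚ) + 1) ^ 2) := by
  obtain ⟨m, rfl⟩ := Nat.exists_eq_add_of_lt h
  have hm : k + m + 1 - k = m + 1 := by omega
  have hm' : k + m + 1 - k - 1 = m := by omega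
  have hf : ((k + m + 1 + k + 2).factorial : ℚ)
      = ((k + m + 1 + k + 2 : ℕ) : ℚ) * (k + m + 1 + k + 1).factorial :=
    mod_cast Nat.factorial_succ _
  rw [G, wzFactor, hm', hm, hf, Nat.factorial_succ m]
  push_cast
  field_simp
  ring

lemma G_succ_right_eq_wzFactor :
    G n (k + 1) = -2 * wzFactor n k * (((k : ℚ) + 1) ^ 2 / (n + 1))
      * (H2 k + 1 / ((k : ℚ) + 1) ^ 2 - 1 / ((n : ℚ) + 1) ^ 2) := by
  have hs : n + (k + 1) + 1 = n + k + 2 := by omega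
  rw [G, wzFactor, H2_succ, Nat.sub_succ', hs, Nat.factorial_succ k, ← add_assoc, pow_succ (-1 : ℚ)]
  push_cast
  field_simp

end

theorem stmt_18 (n k : ℕ) (h : k + 1 ≤ n) :
    F (n + 1) k - F n k = G n (k + 1) - G n k := by
  rw [F_succ_left_eq_wzFactor h, F_eq_wzFactor, G_succ_right_eq_wzFactor, G_eq_wzFactor h]
  field_simp
  ring
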